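/- Let k ≥ 2 and let X be a word with content {x_1,...,x_n} in which each variable occurs at least k−1 times. Then the monoid L_{2k+1}^1 = ⟨a,b,1 | aa=a, bb=b, (ab)^k a = 0⟩ satisfies the identity x_1 x_2 ··· x_n · X · x_n x_{n−1} ··· x_1 ≈ x_1 x_2 ··· x_n · reverse(X) · x_n x_{n−1} ··· x_1. -/

import Mathlib

/-- The alternating word abab⋯ of length ℓ (a = 0, b = 1 in `Fin 3`). -/
def altWord (ℓ : ℕ) : FreeMonoid (Fin 3) :=
  FreeMonoid.ofList ((List.range ℓ).map (fun i => if i % 2 = 0 then (0 : Fin 3) else 1))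

/-- Defining relations of the Lee monoid L_ℓ^1: generators a = 0, b = 1, zero = 2,
relations aa = a, bb = b, abab⋯ (length ℓ) = 0, and 0 is absorbing. -/
def leeRel (ℓ : ℕ) : FreeMonoid (Fin 3) → FreeMonoid (Fin 3) → Prop := fun u v =>
  (u = .of 0 * .of 0 ∧ v = .of 0) ∨
  (u = .of 1 * .of 1 ∧ v = .of 1) ∨
  (u = altWord ℓ ∧ v = .of 2) ∨
  (u = .of 2 * .of 0 ∧ v = .of 2) ∨
  (u = .of 0 * .of 2 ∧ v = .of 2) ∨
  (u = .of 2 * .of 1 ∧ v = .of 2) ∨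
  (u = .of 1 * .of 2 ∧ v = .of 2) ∨
  (u = .of 2 * .of 2 ∧ v = .of 2)

/-- The Lee monoid L_ℓ^1 (with adjoined identity 1, the empty word).
For ℓ = 2 * k + 1 this is L_{2k+1}^1 = ⟨a,b,1 ∣ aa=a, bb=b, (ab)^k a = 0⟩. -/
def Lee (ℓ : ℕ) : Type := (conGen (leeRel ℓ)).Quotient

instance (ℓ : ℕ) : Monoid (Lee ℓ) := Con.monoid _

/-- The word x₁x₂⋯xₙ. -/
def ascFin (n : ℕ) : List (Fin n) := List.ofFn id

/-!
Every element of `L_ℓ^1` is the image of a word in `a`, `b`, `0`. A word containing `0` is `0`; by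
`aa = a` and `bb = b` a word equals its destuttering; and an alternating word in `a`, `b` of
length at least `ℓ + 1` has `abab⋯` (length `ℓ`) as a factor, so it is `0`.

Represent each `θ xᵢ` by a destuttered word `wᵢ`. If some `wᵢ` has two letters, it begins with two
distinct letters and occurs at least `k + 1` times on each side, so both sides have an alternating
subsequence of length `2k + 2`, hence a destuttering of length `≥ 2k + 2`, and both are `0`.
Otherwise every `wᵢ` has length at most one, so the two sides are mirror images of each other
whose first and last letters agree (both are the first letter of `w₁ ⋯ wₙ`). A word and its
reverse have destutterings of the same length, by maximality of the destuttering among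
alternating subsequences; both destutterings are alternating with the same first letter, hence
equal.
-/

open List

namespace List

variable {α ι : Type*}

theorem head?_destutter' (R : α → α → Prop) [DecidableRel R] (a : α) (l : List α) :
    (l.destutter' R a).head? = some a := by
  induction l generalizing a with
  | nil => rfl
  | cons b l ih =>
    rw [destutter'_cons]
    split
    · rfl
    · exact ih a

theorem head?_destutter (R : α → α → Prop) [DecidableRel R] (l : List α) :
    (l.destutter R).head? = l.head? := by
  cases l with
  | nil => rfl
  | cons a l => exact head?_destutter' R a l

theorem length_destutter_ne_reverse [DecidableEq α] (l : List α) :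
    (l.reverse.destutter (· ≠ ·)).length = (l.destutter (· ≠ ·)).length := by
  have key : ∀ l : List α,
      (l.destutter (· ≠ ·)).length ≤ (l.reverse.destutter (· ≠ ·)).length := fun l => by
    simpa using IsChain.length_le_length_destutter_ne (destutter_sublist _ l).reverse
      (isChain_reverse.2 ((isChain_destutter _ l).imp fun _ _ h => Ne.symm h))
  exact le_antisymm (by simpa using key l.reverse) (key l)

theorem isChain_ne_flatten_replicate_pair {x y : α} (hxy : x ≠ y) (m : ℕ) :
    (replicate m [x, y]).flatten.IsChain (· ≠ ·) := by
  induction m with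
  | zero => simp
  | succ m ih =>
    cases m with
    | zero => simpa using hxy
    | succ m =>
      simp only [replicate_succ, flatten_cons, cons_append, nil_append] at ih ⊢
      exact ih.cons_cons hxy.symm |>.cons_cons hxy

theorem two_mul_le_length_destutter_flatten [DecidableEq α] {L : List (List α)} {v : List α}
    {x y : α} {m : ℕ} (hxy : x ≠ y) (hv : [x, y] <+ v) (hL : replicate m v <+ L) :
    2 * m ≤ (L.flatten.destutter (· ≠ ·)).length := by
  have hpair : ∀ j, (replicate j [x, y]).flatten <+ (replicate j v).flatten := by
    intro j
    induction j with
    | zero => simp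
    | succ j ih => simpa [replicate_succ] using hv.append ih
  have hsub : (replicate m [x, y]).flatten <+ L.flatten := (hpair m).trans hL.flatten
  simpa [mul_comm] using
    (isChain_ne_flatten_replicate_pair hxy m).length_le_length_destutter_ne hsub

theorem flatten_map_reverse {w : ι → List α} (hw : ∀ i, (w i).reverse = w i) (s : List ι) :
    (s.reverse.map w).flatten = (s.map w).flatten.reverse := by
  simp [reverse_flatten, Function.comp_def, hw]

theorem head?_eq_getLast?_append_append_reverse {P Q : List α} (h : P = [] → Q = []) :
    (P ++ Q ++ P.reverse).head? = (P ++ Q ++ P.reverse).getLast? := by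
  rcases P with _ | ⟨a, P⟩
  · simp [h rfl]
  · rw [reverse_cons, ← append_assoc, getLast?_concat]
    rfl

end List

def IsAlternating (u : List (Fin 3)) : Prop := u.IsChain (· ≠ ·) ∧ (2 : Fin 3) ∉ u

theorem isAlternating_altWord (ℓ : ℕ) : IsAlternating (altWord ℓ).toList := by
  refine ⟨?_, by simp only [altWord, FreeMonoid.toList_ofList, mem_map]; grind⟩
  simp only [altWord, FreeMonoid.toList_ofList, isChain_map]
  refine (isChain_range _ _).2 fun m _ => ?_
  rcases Nat.mod_two_eq_zero_or_one m with h | h <;> simp [h, Nat.succ_mod_two_eq_zero_iff]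

namespace IsAlternating

theorem of_infix {u v : List (Fin 3)} (hv : IsAlternating v) (h : u <:+: v) : IsAlternating u :=
  ⟨hv.1.infix h, fun h2 => hv.2 (h.subset h2)⟩

theorem tail {a : Fin 3} {u : List (Fin 3)} (h : IsAlternating (a :: u)) : IsAlternating u :=
  h.of_infix (suffix_cons a u).isInfix

theorem eq_of_length_eq_of_head?_eq :
    ∀ {u v : List (Fin 3)}, IsAlternating u → IsAlternating v →
      u.length = v.length → u.head? = v.head? → u = v
  | [], [], _, _, _, _ => rfl
  | [_], [_], _, _, _, hhead => by simpa using hhead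
  | a :: a' :: u, b :: b' :: v, hu, hv, hlen, hhead => by
    obtain rfl : a = b := by simpa using hhead
    have hb' : a' = b' := by
      have key : ∀ a a' b' : Fin 3, a ≠ a' → a ≠ b' → a ≠ 2 → a' ≠ 2 → b' ≠ 2 → a' = b' := by
        decide
      exact key a a' b' (rel_of_isChain_cons_cons hu.1) (rel_of_isChain_cons_cons hv.1)
        (fun h => hu.2 (by simp [h])) (fun h => hu.2 (by simp [h])) (fun h => hv.2 (by simp [h]))
    rw [eq_of_length_eq_of_head?_eq hu.tail hv.tail (by simpa using hlen) (by simp [hb'])]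

theorem altWord_infix {ℓ : ℕ} {u : List (Fin 3)} (hu : IsAlternating u)
    (hlen : ℓ + 1 ≤ u.length) : (altWord ℓ).toList <:+: u := by
  rcases ℓ with _ | ℓ
  · simp [altWord]
  obtain ⟨o, ho, hstart⟩ : ∃ o ≤ 1, (u.drop o).head? = some 0 := by
    rcases u with _ | ⟨a, _ | ⟨b, u⟩⟩
    · simp at hlen
    · simp at hlen
    · have key : ∀ a b : Fin 3, a ≠ b → a ≠ 2 → b ≠ 2 → a = 0 ∨ b = 0 := by decide
      rcases key a b (rel_of_isChain_cons_cons hu.1) (fun h => hu.2 (by simp [h]))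
        (fun h => hu.2 (by simp [h])) with rfl | rfl
      · exact ⟨0, by simp⟩
      · exact ⟨1, by simp⟩
  have hinf : (u.drop o).take (ℓ + 1) <:+: u :=
    (take_prefix _ _).isInfix.trans (drop_suffix _ _).isInfix
  convert hinf using 1
  refine (isAlternating_altWord _).eq_of_length_eq_of_head?_eq (hu.of_infix hinf) ?_ ?_
  · simp [altWord]
    omega
  · rw [head?_take, if_neg (Nat.succ_ne_zero ℓ), hstart]
    simp [altWord, range_succ_eq_map]

end IsAlternating

theorem isAlternating_destutter {u : List (Fin 3)} (h : (2 : Fin 3) ∉ u) :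
    IsAlternating (u.destutter (· ≠ ·)) :=
  ⟨isChain_destutter _ u, fun h2 => h ((destutter_sublist _ u).subset h2)⟩

namespace Lee

variable {ℓ : ℕ} {ι : Type*}

def word (ℓ : ℕ) (u : List (Fin 3)) : Lee ℓ := (conGen (leeRel ℓ)).mk' (FreeMonoid.ofList u)

@[simp]
theorem word_nil : word ℓ [] = 1 := map_one _

theorem word_append (u v : List (Fin 3)) : word ℓ (u ++ v) = word ℓ u * word ℓ v := by
  rw [word, FreeMonoid.ofList_append, map_mul]
  rfl

theorem word_cons (a : Fin 3) (u : List (Fin 3)) : word ℓ (a :: u) = word ℓ [a] * word ℓ u :=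
  word_append [a] u

theorem word_surjective : Function.Surjective (word ℓ) := fun x => by
  obtain ⟨u, rfl⟩ := Con.mk'_surjective x
  exact ⟨u.toList, by rw [word, FreeMonoid.ofList_toList]⟩

theorem prod_map_word (L : List (List (Fin 3))) : (L.map (word ℓ)).prod = word ℓ L.flatten := by
  induction L with
  | nil => simp
  | cons u L ih => rw [map_cons, prod_cons, ih, flatten_cons, word_append]

theorem word_eq_word_of_leeRel {u v : List (Fin 3)}
    (h : leeRel ℓ (FreeMonoid.ofList u) (FreeMonoid.ofList v)) : word ℓ u = word ℓ v :=
  (Con.eq _).2 (ConGen.Rel.of _ _ h)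

theorem word_pair_self (a : Fin 3) : word ℓ [a, a] = word ℓ [a] := by
  apply word_eq_word_of_leeRel
  fin_cases a <;> simp [leeRel]

theorem word_pair_two_left (a : Fin 3) : word ℓ [2, a] = word ℓ [2] := by
  apply word_eq_word_of_leeRel
  fin_cases a <;> simp [leeRel]

theorem word_pair_two_right (a : Fin 3) : word ℓ [a, 2] = word ℓ [2] := by
  apply word_eq_word_of_leeRel
  fin_cases a <;> simp [leeRel]

theorem word_two_mul (u : List (Fin 3)) : word ℓ [2] * word ℓ u = word ℓ [2] := by
  induction u with
  | nil => simp
  | cons a u ih => rw [word_cons a u, ← mul_assoc, ← word_cons, word_pair_two_left, ih]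

theorem word_mul_two (u : List (Fin 3)) : word ℓ u * word ℓ [2] = word ℓ [2] := by
  induction u with
  | nil => simp
  | cons a u ih => rw [word_cons a u, mul_assoc, ih, ← word_cons, word_pair_two_right]

theorem word_eq_two_of_infix {u v : List (Fin 3)} (h : u <:+: v) (hu : word ℓ u = word ℓ [2]) :
    word ℓ v = word ℓ [2] := by
  obtain ⟨p, q, rfl⟩ := h
  rw [word_append, word_append, hu, word_mul_two, word_two_mul]

theorem word_eq_two_of_mem {u : List (Fin 3)} (h : (2 : Fin 3) ∈ u) : word ℓ u = word ℓ [2] :=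
  word_eq_two_of_infix ((singleton_infix_iff 2 u).2 h) rfl

theorem word_altWord : word ℓ (altWord ℓ).toList = word ℓ [2] := by
  apply word_eq_word_of_leeRel
  simp [leeRel]

theorem word_destutter' (a : Fin 3) (u : List (Fin 3)) :
    word ℓ (u.destutter' (· ≠ ·) a) = word ℓ (a :: u) := by
  induction u generalizing a with
  | nil => rfl
  | cons b u ih =>
    rw [destutter'_cons]
    split_ifs with hab
    · rw [word_cons, ih, ← word_cons]
    · obtain rfl : a = b := not_not.1 hab
      rw [ih, show a :: a :: u = [a, a] ++ u from rfl, word_append, word_pair_self, ← word_cons]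

theorem word_destutter (u : List (Fin 3)) : word ℓ (u.destutter (· ≠ ·)) = word ℓ u := by
  cases u with
  | nil => rfl
  | cons a u => exact word_destutter' a u

theorem word_eq_two_of_le_length_destutter {u : List (Fin 3)}
    (h : ℓ + 1 ≤ (u.destutter (· ≠ ·)).length) : word ℓ u = word ℓ [2] := by
  by_cases h2 : (2 : Fin 3) ∈ u
  · exact word_eq_two_of_mem h2
  rw [← word_destutter]
  exact word_eq_two_of_infix ((isAlternating_destutter h2).altWord_infix h) word_altWord

theorem word_reverse {u : List (Fin 3)} (h : u.head? = u.getLast?) :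
    word ℓ u.reverse = word ℓ u := by
  by_cases h2 : (2 : Fin 3) ∈ u
  · rw [word_eq_two_of_mem (mem_reverse.2 h2), word_eq_two_of_mem h2]
  rw [← word_destutter u, ← word_destutter u.reverse]
  congr 1
  refine (isAlternating_destutter (by simpa using h2)).eq_of_length_eq_of_head?_eq
    (isAlternating_destutter h2) (length_destutter_ne_reverse u) ?_
  rw [head?_destutter, head?_destutter, head?_reverse, h]

theorem exists_isChain_word_eq (x : Lee ℓ) :
    ∃ u : List (Fin 3), u.IsChain (· ≠ ·) ∧ word ℓ u = x := by
  obtain ⟨u, rfl⟩ := word_surjective x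
  exact ⟨u.destutter (· ≠ ·), isChain_destutter _ u, word_destutter u⟩

theorem word_flatten_map_eq_two_of_le_count [DecidableEq ι] {w : ι → List (Fin 3)} {s : List ι}
    {i : ι} {m : ℕ} (hw : (w i).IsChain (· ≠ ·)) (hi : 2 ≤ (w i).length) (hm : ℓ + 1 ≤ 2 * m)
    (hcount : m ≤ s.count i) : word ℓ (s.map w).flatten = word ℓ [2] := by
  obtain ⟨x, y, t, hxyt⟩ : ∃ x y t, w i = x :: y :: t := by
    rcases h : w i with _ | ⟨x, _ | ⟨y, t⟩⟩
    all_goals simp [h] at hi ⊢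
  refine word_eq_two_of_le_length_destutter (hm.trans ?_)
  refine two_mul_le_length_destutter_flatten (v := w i) (rel_of_isChain_cons_cons (hxyt ▸ hw))
    (by simp [hxyt]) ?_
  simpa using (replicate_sublist_iff.2 hcount).map w

theorem word_flatten_map_reverse_middle {w : ι → List (Fin 3)} (hw : ∀ i, (w i).length ≤ 1)
    {P Q : List ι} (hQP : ∀ i ∈ Q, i ∈ P) :
    word ℓ ((P ++ Q.reverse ++ P.reverse).map w).flatten =
      word ℓ ((P ++ Q ++ P.reverse).map w).flatten := by
  have hrev : ∀ i, (w i).reverse = w i := fun i =>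
    match w i, hw i with
    | [], _ => rfl
    | [_], _ => rfl
  rw [show P ++ Q.reverse ++ P.reverse = (P ++ Q ++ P.reverse).reverse by simp,
    flatten_map_reverse hrev, word_reverse]
  simp only [map_append, flatten_append, flatten_map_reverse hrev]
  refine head?_eq_getLast?_append_append_reverse fun hP => ?_
  simp_all

end Lee

theorem count_ascFin {n : ℕ} (i : Fin n) : (ascFin n).count i = 1 := by
  simp [ascFin, List.ofFn_id]

theorem mem_ascFin {n : ℕ} (i : Fin n) : i ∈ ascFin n := by
  simp [ascFin]

theorem stmt4_general (k : ℕ) (n : ℕ) (X : List (Fin n))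
    (hocc : ∀ i : Fin n, k - 1 ≤ X.count i)
    (θ : Fin n → Lee (2 * k + 1)) :
    (((ascFin n ++ X ++ (ascFin n).reverse).map θ).prod
      = ((ascFin n ++ X.reverse ++ (ascFin n).reverse).map θ).prod) := by
  choose w hw hθ using fun i => Lee.exists_isChain_word_eq (θ i)
  obtain rfl : θ = Lee.word _ ∘ w := funext fun i => (hθ i).symm
  rw [← map_map, ← map_map, Lee.prod_map_word, Lee.prod_map_word]
  by_cases hlong : ∃ i, 2 ≤ (w i).length
  · obtain ⟨i, hi⟩ := hlong
    have hzero : ∀ Y : List (Fin n), k - 1 ≤ Y.count i →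
        Lee.word (2 * k + 1) ((ascFin n ++ Y ++ (ascFin n).reverse).map w).flatten =
          Lee.word (2 * k + 1) [2] :=
      fun Y hY => Lee.word_flatten_map_eq_two_of_le_count (hw i) hi (m := k + 1) (by omega)
        (by simp only [count_append, count_reverse, count_ascFin]; omega)
    rw [hzero X (hocc i), hzero X.reverse (by simpa using hocc i)]
  · push Not at hlong
    exact (Lee.word_flatten_map_reverse_middle (fun i => Nat.le_of_lt_succ (hlong i))
      fun i _ => mem_ascFin i).symm

/-- Let k ≥ 2 and X a word with content {x₁,…,xₙ} in which every variable occurs at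
least k − 1 times.  Then L_{2k+1}^1 satisfies
x₁x₂⋯xₙ · X · xₙ⋯x₂x₁ ≈ x₁x₂⋯xₙ · reverse(X) · xₙ⋯x₂x₁. -/
theorem stmt4 (k : ℕ) (hk : 2 ≤ k) (n : ℕ) (X : List (Fin n))
    (hocc : ∀ i : Fin n, k - 1 ≤ X.count i)
    (θ : Fin n → Lee (2 * k + 1)) :
    (((ascFin n ++ X ++ (ascFin n).reverse).map θ).prod
      = ((ascFin n ++ X.reverse ++ (ascFin n).reverse).map θ).prod) :=
  stmt4_general k n X hocc θ
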